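/- Let A be any crossed module of groups and let P_A be a nullification functor with respect to A, i.e. a localization functor on XMod whose local objects are exactly the A-null crossed modules and whose coaugmentation p^T : T → P_A T is a regular epimorphism for every T. Then P_A is admissible for the class of regular epimorphisms: applying P_A to any pullback square obtained by pulling back a regular epimorphism h : P_A T → P_A Q along the coaugmentation p^Q : Q → P_A Q yields again a pullback square. -/

import Mathlib

set_option linter.unusedVariables false

/-- A crossed module of groups `(M, G, d)` with `G` acting on `M`. -/
structure XMod : Type 1 where
  M : Type
  G : Type
  [grpM : Group M]
  [grpG : Group G]
  act : G →* MulAut M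
  d : M →* G
  act_d : ∀ (b : G) (t : M), d (act b t) = b * d t * b⁻¹
  peiffer : ∀ (t s : M), act (d t) s = t * s * t⁻¹

attribute [instance] XMod.grpM XMod.grpG

/-- A morphism of crossed modules. -/
structure XModHom (N T : XMod) where
  f1 : N.M →* T.M
  f2 : N.G →* T.G
  comm_d : ∀ n, T.d (f1 n) = f2 (N.d n)
  equiv : ∀ (b : N.G) (n : N.M), f1 (N.act b n) = T.act (f2 b) (f1 n)

namespace XModHom

theorem ext {N T : XMod} {f g : XModHom N T} (h1 : f.f1 = g.f1) (h2 : f.f2 = g.f2) :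
    f = g := by
  cases f; cases g; cases h1; cases h2; rfl

/-- The identity morphism. -/
def id (T : XMod) : XModHom T T :=
  ⟨MonoidHom.id _, MonoidHom.id _, fun _ => rfl, fun _ _ => rfl⟩

/-- Composition of morphisms of crossed modules. -/
def comp {A B C : XMod} (g : XModHom B C) (f : XModHom A B) : XModHom A C where
  f1 := g.f1.comp f.f1
  f2 := g.f2.comp f.f2
  comm_d := by intro n; simp [MonoidHom.comp_apply, g.comm_d, f.comm_d]
  equiv := by intro b n; simp [MonoidHom.comp_apply, f.equiv, g.equiv]

/-- The trivial morphism of crossed modules. -/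
def triv (A B : XMod) : XModHom A B where
  f1 := 1
  f2 := 1
  comm_d := by intro n; simp
  equiv := by intro b n; simp

/-- A morphism of crossed modules is an isomorphism if it has a two-sided inverse. -/
def IsIso {A B : XMod} (f : XModHom A B) : Prop :=
  ∃ g : XModHom B A, comp g f = id A ∧ comp f g = id B

/-- Regular epimorphisms of crossed modules are exactly the componentwise
surjective morphisms. -/
def RegEpi {A B : XMod} (f : XModHom A B) : Prop :=
  Function.Surjective f.f1 ∧ Function.Surjective f.f2

/-- `κ` is a kernel of `α` (in the categorical sense). -/
def IsKernelOf {N T Q : XMod} (κ : XModHom N T) (α : XModHom T Q) : Prop :=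
  comp α κ = triv N Q ∧
    ∀ (X : XMod) (u : XModHom X T), comp α u = triv X Q →
      ∃! v : XModHom X N, comp κ v = u

end XModHom

/-- `1 → N → T → Q → 1` is a short exact sequence of crossed modules. -/
def ShortExact {N T Q : XMod} (κ : XModHom N T) (α : XModHom T Q) : Prop :=
  XModHom.IsKernelOf κ α ∧ XModHom.RegEpi α
/-- A localization functor (coaugmented idempotent functor) on `XMod`. -/
structure LocalizationFunctor where
  obj : XMod → XMod
  map : ∀ {A B : XMod}, XModHom A B → XModHom (obj A) (obj B)
  map_id : ∀ A : XMod, map (XModHom.id A) = XModHom.id (obj A)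
  map_comp : ∀ {A B C : XMod} (f : XModHom A B) (g : XModHom B C),
    map (XModHom.comp g f) = XModHom.comp (map g) (map f)
  ell : ∀ A : XMod, XModHom A (obj A)
  natural : ∀ {A B : XMod} (f : XModHom A B),
    XModHom.comp (ell B) f = XModHom.comp (map f) (ell A)
  iso_ell_obj : ∀ A : XMod, XModHom.IsIso (ell (obj A))
  iso_map_ell : ∀ A : XMod, XModHom.IsIso (map (ell A))

namespace LocalizationFunctor

/-- A crossed module is `L`-local if its coaugmentation is an isomorphism. -/
def IsLocal (L : LocalizationFunctor) (X : XMod) : Prop :=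
  XModHom.IsIso (L.ell X)

/-- `L` is a regular-epi localization if every coaugmentation morphism is a
regular epimorphism. -/
def RegEpiLoc (L : LocalizationFunctor) : Prop :=
  ∀ X : XMod, XModHom.RegEpi (L.ell X)

/-- A short exact sequence is `L`-flat if applying `L` yields a short exact sequence. -/
def LFlat (L : LocalizationFunctor) {N T Q : XMod} (κ : XModHom N T) (α : XModHom T Q) : Prop :=
  ShortExact (L.map κ) (L.map α)

end LocalizationFunctor
section Pullback

variable {T Q Q' : XMod} (α : XModHom T Q) (g : XModHom Q' Q)

/-- Level-1 part of the pullback `T ×_Q Q'`, computed componentwise. -/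
def pbM : Subgroup (T.M × Q'.M) where
  carrier := {p | α.f1 p.1 = g.f1 p.2}
  one_mem' := by simp
  mul_mem' := by
    intro a b ha hb
    simp only [Set.mem_setOf_eq, Prod.fst_mul, Prod.snd_mul, map_mul] at *
    rw [ha, hb]
  inv_mem' := by
    intro a ha
    simp only [Set.mem_setOf_eq, Prod.fst_inv, Prod.snd_inv, map_inv] at *
    rw [ha]

/-- Level-2 part of the pullback `T ×_Q Q'`, computed componentwise. -/
def pbG : Subgroup (T.G × Q'.G) where
  carrier := {p | α.f2 p.1 = g.f2 p.2}
  one_mem' := by simp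
  mul_mem' := by
    intro a b ha hb
    simp only [Set.mem_setOf_eq, Prod.fst_mul, Prod.snd_mul, map_mul] at *
    rw [ha, hb]
  inv_mem' := by
    intro a ha
    simp only [Set.mem_setOf_eq, Prod.fst_inv, Prod.snd_inv, map_inv] at *
    rw [ha]

theorem mem_pbM_iff (p : T.M × Q'.M) : p ∈ pbM α g ↔ α.f1 p.1 = g.f1 p.2 := Iff.rfl

theorem mem_pbG_iff (p : T.G × Q'.G) : p ∈ pbG α g ↔ α.f2 p.1 = g.f2 p.2 := Iff.rfl

theorem pb_act_mem {b : T.G × Q'.G} (hb : b ∈ pbG α g) {p : T.M × Q'.M}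
    (hp : p ∈ pbM α g) : (T.act b.1 p.1, Q'.act b.2 p.2) ∈ pbM α g := by
  have hb' : α.f2 b.1 = g.f2 b.2 := hb
  have hp' : α.f1 p.1 = g.f1 p.2 := hp
  show α.f1 (T.act b.1 p.1) = g.f1 (Q'.act b.2 p.2)
  rw [α.equiv, g.equiv, hb', hp']

theorem XMod.act_inv_act (X : XMod) (b : X.G) (t : X.M) :
    X.act b⁻¹ (X.act b t) = t := by
  rw [← MulAut.mul_apply, ← map_mul, inv_mul_cancel, map_one, MulAut.one_apply]

theorem XMod.act_act_inv (X : XMod) (b : X.G) (t : X.M) :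
    X.act b (X.act b⁻¹ t) = t := by
  rw [← MulAut.mul_apply, ← map_mul, mul_inv_cancel, map_one, MulAut.one_apply]

/-- The action of an element of the pullback on the level-1 part, as a group
automorphism. -/
def pbActEquiv (b : ↥(pbG α g)) : ↥(pbM α g) ≃* ↥(pbM α g) where
  toFun p := ⟨(T.act b.1.1 p.1.1, Q'.act b.1.2 p.1.2), pb_act_mem α g b.2 p.2⟩
  invFun p := ⟨(T.act b.1.1⁻¹ p.1.1, Q'.act b.1.2⁻¹ p.1.2),
    pb_act_mem α g ((pbG α g).inv_mem b.2) p.2⟩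
  left_inv p := by
    apply Subtype.ext
    exact Prod.ext (T.act_inv_act _ _) (Q'.act_inv_act _ _)
  right_inv p := by
    apply Subtype.ext
    exact Prod.ext (T.act_act_inv _ _) (Q'.act_act_inv _ _)
  map_mul' p q := by
    apply Subtype.ext
    exact Prod.ext (map_mul _ _ _) (map_mul _ _ _)

/-- The pullback `T ×_Q Q'` of `α : T → Q` along `g : Q' → Q`, computed
componentwise. -/
def pbXMod : XMod where
  M := ↥(pbM α g)
  G := ↥(pbG α g)
  act :=
    { toFun := pbActEquiv α g
      map_one' := by
        apply MulEquiv.ext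
        intro p
        apply Subtype.ext
        apply Prod.ext
        · show T.act (1 : ↥(pbG α g)).1.1 p.1.1 = p.1.1
          simp
        · show Q'.act (1 : ↥(pbG α g)).1.2 p.1.2 = p.1.2
          simp
      map_mul' := by
        intro b c
        apply MulEquiv.ext
        intro p
        apply Subtype.ext
        apply Prod.ext
        · show T.act (b * c).1.1 p.1.1 = T.act b.1.1 (T.act c.1.1 p.1.1)
          simp [map_mul]
        · show Q'.act (b * c).1.2 p.1.2 = Q'.act b.1.2 (Q'.act c.1.2 p.1.2)
          simp [map_mul] }
  d :=
    { toFun := fun p => ⟨(T.d p.1.1, Q'.d p.1.2), by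
        have hp : α.f1 p.1.1 = g.f1 p.1.2 := p.2
        show α.f2 (T.d p.1.1) = g.f2 (Q'.d p.1.2)
        rw [← α.comm_d, ← g.comm_d, hp]⟩
      map_one' := by
        apply Subtype.ext
        apply Prod.ext <;> simp
      map_mul' := by
        intro p q
        apply Subtype.ext
        apply Prod.ext <;> simp }
  act_d := by
    intro b p
    apply Subtype.ext
    apply Prod.ext
    · exact T.act_d _ _
    · exact Q'.act_d _ _
  peiffer := by
    intro p q
    apply Subtype.ext
    apply Prod.ext
    · exact T.peiffer _ _
    · exact Q'.peiffer _ _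

/-- First projection of the pullback. -/
def pbFst : XModHom (pbXMod α g) T where
  f1 := (MonoidHom.fst T.M Q'.M).comp (pbM α g).subtype
  f2 := (MonoidHom.fst T.G Q'.G).comp (pbG α g).subtype
  comm_d := fun _ => rfl
  equiv := fun _ _ => rfl

/-- Second projection of the pullback. -/
def pbSnd : XModHom (pbXMod α g) Q' where
  f1 := (MonoidHom.snd T.M Q'.M).comp (pbM α g).subtype
  f2 := (MonoidHom.snd T.G Q'.G).comp (pbG α g).subtype
  comm_d := fun _ => rfl
  equiv := fun _ _ => rfl

end Pullback
section PullbackMaps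

variable {N T Q Q' : XMod}

/-- The induced morphism from the kernel `N` into the pullback `T ×_Q Q'`. -/
def pbIn (κ : XModHom N T) (α : XModHom T Q) (g : XModHom Q' Q)
    (h : XModHom.comp α κ = XModHom.triv N Q) : XModHom N (pbXMod α g) where
  f1 :=
    { toFun := fun n => ⟨(κ.f1 n, 1), by
        show α.f1 (κ.f1 n) = g.f1 1
        have := congrArg XModHom.f1 h
        have h' : α.f1 (κ.f1 n) = 1 := DFunLike.congr_fun this n
        rw [h', map_one]⟩
      map_one' := by
        apply Subtype.ext
        apply Prod.ext <;> simp <;> first | rfl | exact map_one _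
      map_mul' := by
        intro a b
        apply Subtype.ext
        show (κ.f1 (a * b), (1 : Q'.M)) = (κ.f1 a, (1 : Q'.M)) * (κ.f1 b, (1 : Q'.M))
        simp [Prod.ext_iff, map_mul] }
  f2 :=
    { toFun := fun n => ⟨(κ.f2 n, 1), by
        show α.f2 (κ.f2 n) = g.f2 1
        have := congrArg XModHom.f2 h
        have h' : α.f2 (κ.f2 n) = 1 := DFunLike.congr_fun this n
        rw [h', map_one]⟩
      map_one' := by
        apply Subtype.ext
        apply Prod.ext <;> simp <;> first | rfl | exact map_one _
      map_mul' := by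
        intro a b
        apply Subtype.ext
        show (κ.f2 (a * b), (1 : Q'.G)) = (κ.f2 a, (1 : Q'.G)) * (κ.f2 b, (1 : Q'.G))
        simp [Prod.ext_iff, map_mul] }
  comm_d := by
    intro n
    apply Subtype.ext
    apply Prod.ext
    · exact κ.comm_d n
    · show Q'.d (1 : Q'.M) = 1
      simp
  equiv := by
    intro b n
    apply Subtype.ext
    apply Prod.ext
    · exact κ.equiv b n
    · show (1 : Q'.M) = Q'.act 1 1
      simp

/-- The induced morphism into the pullback `T ×_Q Q'` from an object mapping
trivially to `Q` through the second leg. -/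
def pbInR (α : XModHom T Q) (g : XModHom Q' Q) {X : XMod} (u : XModHom X Q')
    (h : XModHom.comp g u = XModHom.triv X Q) : XModHom X (pbXMod α g) where
  f1 :=
    { toFun := fun n => ⟨(1, u.f1 n), by
        show α.f1 1 = g.f1 (u.f1 n)
        have := congrArg XModHom.f1 h
        have h' : g.f1 (u.f1 n) = 1 := DFunLike.congr_fun this n
        rw [h', map_one]⟩
      map_one' := by
        apply Subtype.ext
        apply Prod.ext <;> simp <;> first | rfl | exact map_one _
      map_mul' := by
        intro a b
        apply Subtype.ext
        show ((1 : T.M), u.f1 (a * b)) = ((1 : T.M), u.f1 a) * ((1 : T.M), u.f1 b)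
        simp [Prod.ext_iff, map_mul] }
  f2 :=
    { toFun := fun n => ⟨(1, u.f2 n), by
        show α.f2 1 = g.f2 (u.f2 n)
        have := congrArg XModHom.f2 h
        have h' : g.f2 (u.f2 n) = 1 := DFunLike.congr_fun this n
        rw [h', map_one]⟩
      map_one' := by
        apply Subtype.ext
        apply Prod.ext <;> simp <;> first | rfl | exact map_one _
      map_mul' := by
        intro a b
        apply Subtype.ext
        show ((1 : T.G), u.f2 (a * b)) = ((1 : T.G), u.f2 a) * ((1 : T.G), u.f2 b)
        simp [Prod.ext_iff, map_mul] }
  comm_d := by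
    intro n
    apply Subtype.ext
    apply Prod.ext
    · show T.d (1 : T.M) = 1
      simp
    · exact u.comm_d n
  equiv := by
    intro b n
    apply Subtype.ext
    apply Prod.ext
    · show (1 : T.M) = T.act 1 1
      simp
    · exact u.equiv b n

/-- The morphism of pullbacks `T ×_Q Q' → E ×_Q Q'` induced by `f : T → E`
with `p ∘ f = α`. -/
def pbMapL {E : XMod} (α : XModHom T Q) (p : XModHom E Q) (g : XModHom Q' Q)
    (f : XModHom T E) (hpf : XModHom.comp p f = α) :
    XModHom (pbXMod α g) (pbXMod p g) where
  f1 :=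
    { toFun := fun w => ⟨(f.f1 w.1.1, w.1.2), by
        show p.f1 (f.f1 w.1.1) = g.f1 w.1.2
        have h' : p.f1 (f.f1 w.1.1) = α.f1 w.1.1 :=
          DFunLike.congr_fun (congrArg XModHom.f1 hpf) w.1.1
        rw [h']
        exact w.2⟩
      map_one' := by
        apply Subtype.ext
        apply Prod.ext <;> simp <;> first | rfl | exact map_one _
      map_mul' := by
        intro a b
        apply Subtype.ext
        apply Prod.ext
        · exact map_mul f.f1 a.1.1 b.1.1
        · rfl }
  f2 :=
    { toFun := fun w => ⟨(f.f2 w.1.1, w.1.2), by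
        show p.f2 (f.f2 w.1.1) = g.f2 w.1.2
        have h' : p.f2 (f.f2 w.1.1) = α.f2 w.1.1 :=
          DFunLike.congr_fun (congrArg XModHom.f2 hpf) w.1.1
        rw [h']
        exact w.2⟩
      map_one' := by
        apply Subtype.ext
        apply Prod.ext <;> simp <;> first | rfl | exact map_one _
      map_mul' := by
        intro a b
        apply Subtype.ext
        apply Prod.ext
        · exact map_mul f.f2 a.1.1 b.1.1
        · rfl }
  comm_d := by
    intro w
    apply Subtype.ext
    apply Prod.ext
    · exact f.comm_d _
    · rfl
  equiv := by
    intro b w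
    apply Subtype.ext
    apply Prod.ext
    · exact f.equiv _ _
    · rfl

end PullbackMaps

/-- A commuting square is a pullback square (categorical definition). -/
def IsPullbackSquare {P X Y Z : XMod} (p1 : XModHom P X) (p2 : XModHom P Y)
    (f : XModHom X Z) (h : XModHom Y Z) : Prop :=
  XModHom.comp f p1 = XModHom.comp h p2 ∧
    ∀ (W : XMod) (u : XModHom W X) (v : XModHom W Y),
      XModHom.comp f u = XModHom.comp h v →
        ∃! w : XModHom W P, XModHom.comp p1 w = u ∧ XModHom.comp p2 w = v

namespace LocalizationFunctor

/-- `L` is admissible for the class of regular epimorphisms: applying `L` to the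
pullback of a regular epimorphism `α : LT → LQ` along the coaugmentation
`ℓ^Q : Q → LQ` yields again a pullback square. -/
def Admissible (L : LocalizationFunctor) : Prop :=
  ∀ (T Q : XMod) (α : XModHom (L.obj T) (L.obj Q)), XModHom.RegEpi α →
    IsPullbackSquare (L.map (pbFst α (L.ell Q))) (L.map (pbSnd α (L.ell Q)))
      (L.map α) (L.map (L.ell Q))

/-- `L` is conditionally flat: the pullback of any `L`-flat short exact sequence
along any morphism is again `L`-flat. -/
def ConditionallyFlat (L : LocalizationFunctor) : Prop :=
  ∀ (N T Q : XMod) (κ : XModHom N T) (α : XModHom T Q) (hse : ShortExact κ α),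
    L.LFlat κ α →
      ∀ (Q' : XMod) (g : XModHom Q' Q),
        L.LFlat (pbIn κ α g hse.1.1) (pbSnd α g)

/-- A short exact sequence `1 → N → T → Q → 1` admits a fiberwise localization:
there is a short exact sequence `1 → LN → E → Q → 1` together with an
`L`-equivalence `T → E` compatible with the coaugmentation of `N`. -/
def AdmitsFiberwise (L : LocalizationFunctor) {N T Q : XMod} (κ : XModHom N T)
    (α : XModHom T Q) : Prop :=
  ∃ (E : XMod) (j : XModHom (L.obj N) E) (p : XModHom E Q) (e : XModHom T E),
    ShortExact j p ∧ XModHom.IsIso (L.map e) ∧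
      XModHom.comp e κ = XModHom.comp j (L.ell N) ∧ XModHom.comp p e = α

end LocalizationFunctor
section Kernel

variable {N T : XMod} (f : XModHom N T)

theorem ker_act_mem {b : N.G} (hb : b ∈ f.f2.ker) {n : N.M} (hn : n ∈ f.f1.ker) :
    N.act b n ∈ f.f1.ker := by
  have hb' : f.f2 b = 1 := hb
  have hn' : f.f1 n = 1 := hn
  show f.f1 (N.act b n) = 1
  rw [f.equiv, hb', hn', map_one]

/-- The automorphism of `ker f.f1` induced by an element of `ker f.f2`. -/
def kerActEquiv (b : ↥f.f2.ker) : ↥f.f1.ker ≃* ↥f.f1.ker where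
  toFun n := ⟨N.act b.1 n.1, ker_act_mem f b.2 n.2⟩
  invFun n := ⟨N.act b.1⁻¹ n.1, ker_act_mem f (f.f2.ker.inv_mem b.2) n.2⟩
  left_inv n := Subtype.ext (N.act_inv_act _ _)
  right_inv n := Subtype.ext (N.act_act_inv _ _)
  map_mul' n m := Subtype.ext (map_mul _ _ _)

/-- The kernel of a morphism of crossed modules, computed componentwise. -/
def kerXMod : XMod where
  M := ↥f.f1.ker
  G := ↥f.f2.ker
  act :=
    { toFun := kerActEquiv f
      map_one' := by
        apply MulEquiv.ext
        intro n
        apply Subtype.ext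
        show N.act (1 : ↥f.f2.ker).1 n.1 = n.1
        simp
      map_mul' := by
        intro b c
        apply MulEquiv.ext
        intro n
        apply Subtype.ext
        show N.act (b * c).1 n.1 = N.act b.1 (N.act c.1 n.1)
        simp [map_mul] }
  d :=
    { toFun := fun n => ⟨N.d n.1, by
        have hn : f.f1 n.1 = 1 := n.2
        show f.f2 (N.d n.1) = 1
        rw [← f.comm_d, hn, map_one]⟩
      map_one' := by
        apply Subtype.ext
        simp
      map_mul' := by
        intro a b
        apply Subtype.ext
        show N.d (a * b).1 = N.d a.1 * N.d b.1
        simp }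
  act_d := by
    intro b n
    apply Subtype.ext
    exact N.act_d _ _
  peiffer := by
    intro n m
    apply Subtype.ext
    exact N.peiffer _ _

/-- The inclusion of the kernel. -/
def kerIncl : XModHom (kerXMod f) N where
  f1 := f.f1.ker.subtype
  f2 := f.f2.ker.subtype
  comm_d := fun _ => rfl
  equiv := fun _ _ => rfl

end Kernel

/-- A crossed module is trivial if both underlying groups are trivial. -/
def XMod.IsTrivial (X : XMod) : Prop :=
  (∀ m : X.M, m = 1) ∧ ∀ b : X.G, b = 1

/-- `X` is `A`-null if the only morphism of crossed modules `A → X` is the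
trivial one. -/
def ANull (A X : XMod) : Prop :=
  ∀ φ : XModHom A X, φ = XModHom.triv A X

/-- `X` is `f`-local if precomposition with `f` is a bijection on morphisms
into `X`. -/
def FLocal {B C : XMod} (f : XModHom B C) (X : XMod) : Prop :=
  Function.Bijective fun φ : XModHom C X => XModHom.comp φ f

/-- The subgroup `[N₂, N₁]` of `N₁` generated by the elements `ᵇt·t⁻¹`. -/
def actCommutator (N : XMod) : Subgroup N.M :=
  Subgroup.closure {x | ∃ (b : N.G) (t : N.M), x = N.act b t * t⁻¹}

section NormalClosure

variable {A W : XMod} (φ : XModHom A W)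

/-- The level-2 part of the normal closure of the image of `φ`:
the normal closure of `φ₂(A₂)` in `W₂`. -/
def ncl2 : Subgroup W.G :=
  Subgroup.normalClosure (Set.range φ.f2)

/-- The level-1 part of the normal closure of the image of `φ`:
the subgroup `φ₁(A₁)^{W₂}·[φ₂(A₂)^{W₂}, W₁]` of `W₁`. -/
def ncl1 : Subgroup W.M :=
  Subgroup.closure
    ({x | ∃ (b : W.G) (m : A.M), x = W.act b (φ.f1 m)} ∪
      {x | ∃ s ∈ ncl2 φ, ∃ w : W.M, x = W.act s w * w⁻¹})

end NormalClosure


/-!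
Write `π₁, π₂` for the projections of `W = PT ×_{PQ} Q`. Since `P(ℓ^Q)` is an isomorphism, the
image square is a pullback as soon as `P(π₁)` is an isomorphism too, i.e. as soon as every
morphism `u : W → Z` to an `A`-null `Z` factors uniquely through `π₁`. As `π₁` is surjective,
this means that `u` kills `ker π₁ = {(1, q) | q ∈ ker ℓ^Q}`. The `q ∈ ker ℓ^Q` with
`u (1, q) = 1` form a normal sub-crossed module `K` of `Q` (normal because `α` is surjective),
and `Q/K` is `A`-null: it maps to the `A`-null `PQ` with kernel `ker ℓ^Q / K`, which embeds into
`Z` through `u`. Hence `Q → Q/K` factors through `ℓ^Q`, so `ker ℓ^Q ⊆ K`.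
-/

namespace XModHom

variable {W X Y Z : XMod}

@[simp]
theorem comp_f1_apply (g : XModHom Y Z) (f : XModHom X Y) (x : X.M) :
    (comp g f).f1 x = g.f1 (f.f1 x) := rfl

@[simp]
theorem comp_f2_apply (g : XModHom Y Z) (f : XModHom X Y) (x : X.G) :
    (comp g f).f2 x = g.f2 (f.f2 x) := rfl

theorem comp_assoc (h : XModHom Y Z) (g : XModHom X Y) (f : XModHom W X) :
    comp (comp h g) f = comp h (comp g f) := rfl

@[simp]
theorem id_comp (f : XModHom X Y) : comp (id Y) f = f := rfl

@[simp]
theorem comp_id (f : XModHom X Y) : comp f (id X) = f := rfl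

theorem congr_f1 {f g : XModHom X Y} (h : f = g) (x : X.M) : f.f1 x = g.f1 x := by rw [h]

theorem congr_f2 {f g : XModHom X Y} (h : f = g) (x : X.G) : f.f2 x = g.f2 x := by rw [h]

theorem IsIso.cancel_left {f : XModHom Y Z} (hf : IsIso f) {g g' : XModHom X Y}
    (h : comp f g = comp f g') : g = g' := by
  obtain ⟨e, he, -⟩ := hf
  rw [← id_comp g, ← id_comp g', ← he, comp_assoc, comp_assoc, h]

theorem IsIso.cancel_right {f : XModHom X Y} (hf : IsIso f) {g g' : XModHom Y Z}
    (h : comp g f = comp g' f) : g = g' := by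
  obtain ⟨e, -, he⟩ := hf
  rw [← comp_id g, ← comp_id g', ← he, ← comp_assoc, ← comp_assoc, h]

end XModHom

open XModHom

theorem isPullbackSquare_of_isIso {V X Y Z : XMod} {p1 : XModHom V X} {p2 : XModHom V Y}
    {f : XModHom X Z} {h : XModHom Y Z} (hcomm : comp f p1 = comp h p2)
    (hp1 : IsIso p1) (hh : IsIso h) : IsPullbackSquare p1 p2 f h := by
  obtain ⟨θ, hθ1, hθ2⟩ := hp1
  refine ⟨hcomm, fun W u v huv => ⟨comp θ u, ⟨?_, ?_⟩, ?_⟩⟩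
  · rw [← comp_assoc, hθ2, id_comp]
  · refine hh.cancel_left ?_
    rw [← comp_assoc, ← hcomm, comp_assoc, ← comp_assoc p1, hθ2, id_comp, huv]
  · rintro w ⟨rfl, -⟩
    rw [← comp_assoc, hθ1, id_comp]

namespace LocalizationFunctor

variable (L : LocalizationFunctor) {X Y Z : XMod}

theorem isLocal_obj (X : XMod) : L.IsLocal (L.obj X) := L.iso_ell_obj X

theorem eq_of_map_eq (hZ : L.IsLocal Z) {φ φ' : XModHom Y Z} (h : L.map φ = L.map φ') :
    φ = φ' :=
  hZ.cancel_left (by rw [L.natural, L.natural, h])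

theorem fLocal_of_isIso_map {f : XModHom X Y} (hf : IsIso (L.map f)) (hZ : L.IsLocal Z) :
    FLocal f Z := by
  refine ⟨fun φ φ' h => L.eq_of_map_eq hZ (hf.cancel_right ?_), fun v => ?_⟩
  · rw [← L.map_comp, ← L.map_comp]
    exact congrArg L.map h
  obtain ⟨θ, hθ, -⟩ := hf
  obtain ⟨e, he, -⟩ := hZ
  refine ⟨comp e (comp (L.map v) (comp θ (L.ell Y))), ?_⟩
  show comp (comp e (comp (L.map v) (comp θ (L.ell Y)))) f = v
  rw [comp_assoc, comp_assoc, comp_assoc, L.natural, ← comp_assoc θ, hθ, id_comp, ← L.natural,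
    ← comp_assoc, he, id_comp]

theorem isIso_map_of_forall_fLocal {f : XModHom X Y} (h : ∀ Z, L.IsLocal Z → FLocal f Z) :
    IsIso (L.map f) := by
  -- the inverse extends `ℓ^X` first along `f`, then along `ℓ^Y`
  obtain ⟨g, hg⟩ := (h _ (L.isLocal_obj X)).2 (L.ell X)
  obtain ⟨θ, hθ⟩ := (L.fLocal_of_isIso_map (L.iso_map_ell Y) (L.isLocal_obj X)).2 g
  change comp g f = L.ell X at hg
  change comp θ (L.ell Y) = g at hθ
  refine ⟨θ, (L.fLocal_of_isIso_map (L.iso_map_ell X) (L.isLocal_obj X)).1 ?_,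
    (L.fLocal_of_isIso_map (L.iso_map_ell Y) (L.isLocal_obj Y)).1 ?_⟩
  · show comp (comp θ (L.map f)) (L.ell X) = comp (XModHom.id _) (L.ell X)
    rw [comp_assoc, ← L.natural, ← comp_assoc, hθ, hg, id_comp]
  · show comp (comp (L.map f) θ) (L.ell Y) = comp (XModHom.id _) (L.ell Y)
    rw [comp_assoc, hθ, id_comp]
    refine (h _ (L.isLocal_obj Y)).1 ?_
    show comp (comp (L.map f) g) f = comp (L.ell Y) f
    rw [comp_assoc, hg, L.natural]

theorem ker_ell_le_ker (hZ : L.IsLocal Z) (f : XModHom X Z) :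
    (L.ell X).f1.ker ≤ f.f1.ker ∧ (L.ell X).f2.ker ≤ f.f2.ker := by
  obtain ⟨e, he, -⟩ := hZ
  have hf : f = comp (comp e (L.map f)) (L.ell X) := by
    rw [comp_assoc, ← L.natural, ← comp_assoc, he, id_comp]
  constructor <;> intro x hx <;> rw [MonoidHom.mem_ker] at hx ⊢ <;> rw [hf] <;> simp [hx]

end LocalizationFunctor

namespace XModHom

variable {X Y Z : XMod} {f : XModHom X Y}

theorem RegEpi.cancel_right (hf : RegEpi f) {g g' : XModHom Y Z} (h : comp g f = comp g' f) :
    g = g' := by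
  refine XModHom.ext (MonoidHom.ext fun y => ?_) (MonoidHom.ext fun b => ?_)
  · obtain ⟨x, rfl⟩ := hf.1 y
    exact congr_f1 h x
  · obtain ⟨a, rfl⟩ := hf.2 b
    exact congr_f2 h a

theorem RegEpi.exists_comp_eq (hf : RegEpi f) (u : XModHom X Z) (h1 : f.f1.ker ≤ u.f1.ker)
    (h2 : f.f2.ker ≤ u.f2.ker) : ∃ v : XModHom Y Z, comp v f = u := by
  set v1 := f.f1.liftOfSurjective hf.1 ⟨u.f1, h1⟩
  set v2 := f.f2.liftOfSurjective hf.2 ⟨u.f2, h2⟩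
  have hv1 : ∀ x, v1 (f.f1 x) = u.f1 x := f.f1.liftOfRightInverse_comp_apply _ _ ⟨u.f1, h1⟩
  have hv2 : ∀ x, v2 (f.f2 x) = u.f2 x := f.f2.liftOfRightInverse_comp_apply _ _ ⟨u.f2, h2⟩
  refine ⟨⟨v1, v2, fun y => ?_, fun b y => ?_⟩,
    XModHom.ext (MonoidHom.ext hv1) (MonoidHom.ext hv2)⟩
  · obtain ⟨x, rfl⟩ := hf.1 y
    rw [hv1, u.comm_d, f.comm_d, hv2]
  · obtain ⟨a, rfl⟩ := hf.2 b
    obtain ⟨x, rfl⟩ := hf.1 y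
    rw [← f.equiv, hv1, hv1, hv2, u.equiv]

theorem RegEpi.fLocal (hf : RegEpi f)
    (h : ∀ u : XModHom X Z, f.f1.ker ≤ u.f1.ker ∧ f.f2.ker ≤ u.f2.ker) : FLocal f Z :=
  ⟨fun _ _ => hf.cancel_right, fun u => hf.exists_comp_eq u (h u).1 (h u).2⟩

theorem comp_kerIncl (f : XModHom X Y) : comp f (kerIncl f) = triv (kerXMod f) Y :=
  XModHom.ext (MonoidHom.ext fun x => x.2) (MonoidHom.ext fun x => x.2)

def kerLift (f : XModHom X Y) (v : XModHom Z X) (hv : comp f v = triv Z Y) :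
    XModHom Z (kerXMod f) where
  f1 := v.f1.codRestrict f.f1.ker fun z => congr_f1 hv z
  f2 := v.f2.codRestrict f.f2.ker fun z => congr_f2 hv z
  comm_d z := Subtype.ext (v.comm_d z)
  equiv b z := Subtype.ext (v.equiv b z)

theorem regEpi_kerLift {X' : XMod} {p : XModHom X X'} (hp : RegEpi p) {g : XModHom X Y}
    {q : XModHom X' Y} (hg : comp q p = g) (hv : comp q (comp p (kerIncl g)) = triv _ Y) :
    RegEpi (kerLift q (comp p (kerIncl g)) hv) := by
  constructor
  · rintro ⟨y, hy⟩
    obtain ⟨x, rfl⟩ := hp.1 y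
    exact ⟨⟨x, by rw [MonoidHom.mem_ker, ← hg]; exact hy⟩, rfl⟩
  · rintro ⟨y, hy⟩
    obtain ⟨x, rfl⟩ := hp.2 y
    exact ⟨⟨x, by rw [MonoidHom.mem_ker, ← hg]; exact hy⟩, rfl⟩

end XModHom

theorem aNull_of_ker_embedding {A X Y Z : XMod} (f : XModHom X Y) (hY : ANull A Y)
    (j : XModHom (kerXMod f) Z) (hj1 : Function.Injective j.f1) (hj2 : Function.Injective j.f2)
    (hZ : ANull A Z) : ANull A X := by
  intro φ
  have hψ := hZ (comp j (kerLift f φ (hY _)))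
  refine XModHom.ext (MonoidHom.ext fun a => ?_) (MonoidHom.ext fun a => ?_)
  · exact congrArg Subtype.val (hj1 ((congr_f1 hψ a).trans (map_one j.f1).symm))
  · exact congrArg Subtype.val (hj2 ((congr_f2 hψ a).trans (map_one j.f2).symm))

structure XMod.NormalSub (X : XMod) where
  N1 : Subgroup X.M
  N2 : Subgroup X.G
  [normal1 : N1.Normal]
  [normal2 : N2.Normal]
  act_mem : ∀ (b : X.G), ∀ m ∈ N1, X.act b m ∈ N1
  d_mem : ∀ m ∈ N1, X.d m ∈ N2
  act_mul_inv_mem : ∀ k ∈ N2, ∀ m : X.M, X.act k m * m⁻¹ ∈ N1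

namespace XMod.NormalSub

attribute [instance] normal1 normal2

variable {X Y : XMod}

def ker (f : XModHom X Y) : X.NormalSub where
  N1 := f.f1.ker
  N2 := f.f2.ker
  act_mem b m hm := by rw [MonoidHom.mem_ker, f.equiv, hm, map_one]
  d_mem m hm := by rw [MonoidHom.mem_ker, ← f.comm_d, hm, map_one]
  act_mul_inv_mem k hk m := by
    rw [MonoidHom.mem_ker, map_mul, f.equiv, hk, map_one, MulAut.one_apply, map_inv,
      mul_inv_cancel]

instance : Min X.NormalSub where
  min K K' :=
    { N1 := K.N1 ⊓ K'.N1
      N2 := K.N2 ⊓ K'.N2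
      act_mem := fun b m hm => ⟨K.act_mem b m hm.1, K'.act_mem b m hm.2⟩
      d_mem := fun m hm => ⟨K.d_mem m hm.1, K'.d_mem m hm.2⟩
      act_mul_inv_mem := fun k hk m =>
        ⟨K.act_mul_inv_mem k hk.1 m, K'.act_mul_inv_mem k hk.2 m⟩ }

def map (K : X.NormalSub) (f : XModHom X Y) (hf : f.RegEpi) : Y.NormalSub where
  N1 := K.N1.map f.f1
  N2 := K.N2.map f.f2
  normal1 := K.normal1.map f.f1 hf.1
  normal2 := K.normal2.map f.f2 hf.2
  act_mem b m hm := by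
    obtain ⟨b, rfl⟩ := hf.2 b
    obtain ⟨m, hm, rfl⟩ := hm
    exact ⟨_, K.act_mem b m hm, f.equiv b m⟩
  d_mem m hm := by
    obtain ⟨m, hm, rfl⟩ := hm
    exact ⟨_, K.d_mem m hm, (f.comm_d m).symm⟩
  act_mul_inv_mem k hk m := by
    obtain ⟨k, hk, rfl⟩ := hk
    obtain ⟨m, rfl⟩ := hf.1 m
    exact ⟨_, K.act_mul_inv_mem k hk m, by rw [map_mul, map_inv, f.equiv]⟩

variable (K : X.NormalSub)

theorem map_act_eq (b : X.G) : K.N1.map (X.act b : X.M →* X.M) = K.N1 :=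
  le_antisymm (Subgroup.map_le_iff_le_comap.2 fun m hm => K.act_mem b m hm)
    fun m hm => ⟨X.act b⁻¹ m, K.act_mem _ m hm, X.act_act_inv b m⟩

def quotAct : X.G →* MulAut (X.M ⧸ K.N1) where
  toFun b := QuotientGroup.congr K.N1 K.N1 (X.act b) (K.map_act_eq b)
  map_one' := MulEquiv.ext fun x => QuotientGroup.induction_on x fun m => by
    simp [QuotientGroup.congr_mk]
  map_mul' b c := MulEquiv.ext fun x => QuotientGroup.induction_on x fun m => by
    simp [QuotientGroup.congr_mk]

theorem quotAct_mk (b : X.G) (m : X.M) :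
    K.quotAct b (m : X.M ⧸ K.N1) = (X.act b m : X.M ⧸ K.N1) := rfl

def quotient : XMod where
  M := X.M ⧸ K.N1
  G := X.G ⧸ K.N2
  act := QuotientGroup.lift K.N2 K.quotAct fun k hk =>
    MulEquiv.ext fun x => QuotientGroup.induction_on x fun m => by
      rw [MulAut.one_apply, K.quotAct_mk, QuotientGroup.eq_iff_div_mem, div_eq_mul_inv]
      exact K.act_mul_inv_mem k hk m
  d := QuotientGroup.map K.N1 K.N2 X.d K.d_mem
  act_d b t := QuotientGroup.induction_on b fun b => QuotientGroup.induction_on t fun m =>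
    congrArg ((↑) : X.G → X.G ⧸ K.N2) (X.act_d b m)
  peiffer t s := QuotientGroup.induction_on t fun m => QuotientGroup.induction_on s fun n =>
    congrArg ((↑) : X.M → X.M ⧸ K.N1) (X.peiffer m n)

def proj : XModHom X K.quotient where
  f1 := QuotientGroup.mk' K.N1
  f2 := QuotientGroup.mk' K.N2
  comm_d _ := rfl
  equiv _ _ := rfl

theorem proj_regEpi : K.proj.RegEpi :=
  ⟨QuotientGroup.mk'_surjective K.N1, QuotientGroup.mk'_surjective K.N2⟩

theorem ker_proj_f1 : K.proj.f1.ker = K.N1 := QuotientGroup.ker_mk' K.N1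

theorem ker_proj_f2 : K.proj.f2.ker = K.N2 := QuotientGroup.ker_mk' K.N2

end XMod.NormalSub

section PullbackFiber

variable {T Q Q' Z : XMod} (α : XModHom T Q) (g : XModHom Q' Q)

theorem pb_condition : comp α (pbFst α g) = comp g (pbSnd α g) :=
  XModHom.ext (MonoidHom.ext fun w => w.2) (MonoidHom.ext fun w => w.2)

variable {α g}

theorem pbFst_regEpi (hg : g.RegEpi) : (pbFst α g).RegEpi := by
  constructor
  · intro t
    obtain ⟨q, hq⟩ := hg.1 (α.f1 t)
    exact ⟨⟨(t, q), hq.symm⟩, rfl⟩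
  · intro t
    obtain ⟨q, hq⟩ := hg.2 (α.f2 t)
    exact ⟨⟨(t, q), hq.symm⟩, rfl⟩

theorem pbSnd_regEpi (hα : α.RegEpi) : (pbSnd α g).RegEpi := by
  constructor
  · intro q
    obtain ⟨t, ht⟩ := hα.1 (g.f1 q)
    exact ⟨⟨(t, q), ht⟩, rfl⟩
  · intro q
    obtain ⟨t, ht⟩ := hα.2 (g.f2 q)
    exact ⟨⟨(t, q), ht⟩, rfl⟩

variable (α g)

def fiberIncl : XModHom (kerXMod g) (pbXMod α g) := pbInR α g (kerIncl g) (comp_kerIncl g)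

variable {α g}

theorem exists_fiberIncl_f1_eq {w : (pbXMod α g).M} (hw : (pbFst α g).f1 w = 1) :
    ∃ x, (fiberIncl α g).f1 x = w := by
  have hx : g.f1 w.1.2 = 1 := by rw [← w.2]; exact (congrArg α.f1 hw).trans (map_one _)
  exact ⟨⟨w.1.2, hx⟩, Subtype.ext (Prod.ext hw.symm rfl)⟩

theorem exists_fiberIncl_f2_eq {w : (pbXMod α g).G} (hw : (pbFst α g).f2 w = 1) :
    ∃ x, (fiberIncl α g).f2 x = w := by
  have hx : g.f2 w.1.2 = 1 := by rw [← w.2]; exact (congrArg α.f2 hw).trans (map_one _)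
  exact ⟨⟨w.1.2, hx⟩, Subtype.ext (Prod.ext hw.symm rfl)⟩

variable (hα : α.RegEpi) (u : XModHom (pbXMod α g) Z)

def fiberKer : Q'.NormalSub :=
  (XMod.NormalSub.ker (pbFst α g) ⊓ XMod.NormalSub.ker u).map (pbSnd α g) (pbSnd_regEpi hα)

theorem fiberKer_N1_le : (fiberKer hα u).N1 ≤ g.f1.ker := by
  rintro _ ⟨w, ⟨hw, -⟩, rfl⟩
  obtain ⟨x, rfl⟩ := exists_fiberIncl_f1_eq hw
  exact x.2

theorem fiberKer_N2_le : (fiberKer hα u).N2 ≤ g.f2.ker := by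
  rintro _ ⟨w, ⟨hw, -⟩, rfl⟩
  obtain ⟨x, rfl⟩ := exists_fiberIncl_f2_eq hw
  exact x.2

theorem mem_fiberKer_N1_iff (x : g.f1.ker) :
    x.1 ∈ (fiberKer hα u).N1 ↔ u.f1 ((fiberIncl α g).f1 x) = 1 := by
  refine ⟨fun ⟨w, ⟨hw1, hw2⟩, hwx⟩ => ?_, fun h => ⟨_, ⟨rfl, h⟩, rfl⟩⟩
  rwa [show (fiberIncl α g).f1 x = w from Subtype.ext (Prod.ext hw1.symm hwx.symm)]

theorem mem_fiberKer_N2_iff (x : g.f2.ker) :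
    x.1 ∈ (fiberKer hα u).N2 ↔ u.f2 ((fiberIncl α g).f2 x) = 1 := by
  refine ⟨fun ⟨w, ⟨hw1, hw2⟩, hwx⟩ => ?_, fun h => ⟨_, ⟨rfl, h⟩, rfl⟩⟩
  rwa [show (fiberIncl α g).f2 x = w from Subtype.ext (Prod.ext hw1.symm hwx.symm)]

theorem aNull_quotient_fiberKer {A : XMod} (hQ : ANull A Q) (hZ : ANull A Z) :
    ANull A (fiberKer hα u).quotient := by
  set K := fiberKer hα u
  obtain ⟨q, hq⟩ := K.proj_regEpi.exists_comp_eq g (K.ker_proj_f1 ▸ fiberKer_N1_le hα u)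
    (K.ker_proj_f2 ▸ fiberKer_N2_le hα u)
  have hqK : comp q (comp K.proj (kerIncl g)) = triv _ Q := by
    rw [← comp_assoc, hq, comp_kerIncl]
  have hρ := regEpi_kerLift K.proj_regEpi hq hqK
  -- `v` sends the class of `x ∈ ker g` to `u (1, x)`; it is injective by the choice of `K`
  obtain ⟨v, hv⟩ := hρ.exists_comp_eq (comp u (fiberIncl α g))
    (fun x hx => (mem_fiberKer_N1_iff hα u x).1 ((QuotientGroup.eq_one_iff _).1
      (congrArg Subtype.val hx)))
    (fun x hx => (mem_fiberKer_N2_iff hα u x).1 ((QuotientGroup.eq_one_iff _).1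
      (congrArg Subtype.val hx)))
  refine aNull_of_ker_embedding q hQ v ((injective_iff_map_eq_one _).2 fun y hy => ?_)
    ((injective_iff_map_eq_one _).2 fun y hy => ?_) hZ
  · obtain ⟨x, rfl⟩ := hρ.1 y
    rw [← comp_f1_apply, hv] at hy
    exact Subtype.ext ((QuotientGroup.eq_one_iff _).2 ((mem_fiberKer_N1_iff hα u x).2 hy))
  · obtain ⟨x, rfl⟩ := hρ.2 y
    rw [← comp_f2_apply, hv] at hy
    exact Subtype.ext ((QuotientGroup.eq_one_iff _).2 ((mem_fiberKer_N2_iff hα u x).2 hy))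

end PullbackFiber

section Nullification

variable {A T Q Z : XMod} {P : LocalizationFunctor} {α : XModHom (P.obj T) (P.obj Q)}

theorem ker_ell_le_fiberKer (hloc : ∀ X : XMod, P.IsLocal X ↔ ANull A X) (hα : α.RegEpi)
    (u : XModHom (pbXMod α (P.ell Q)) Z) (hZ : ANull A Z) :
    (P.ell Q).f1.ker ≤ (fiberKer hα u).N1 ∧ (P.ell Q).f2.ker ≤ (fiberKer hα u).N2 := by
  have hK : P.IsLocal (fiberKer hα u).quotient :=
    (hloc _).2 (aNull_quotient_fiberKer hα u ((hloc _).1 (P.isLocal_obj Q)) hZ)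
  have h := P.ker_ell_le_ker hK (fiberKer hα u).proj
  rwa [XMod.NormalSub.ker_proj_f1, XMod.NormalSub.ker_proj_f2] at h

theorem fLocal_pbFst_ell (hloc : ∀ X : XMod, P.IsLocal X ↔ ANull A X)
    (hepi : (P.ell Q).RegEpi) (hα : α.RegEpi) (hZ : P.IsLocal Z) :
    FLocal (pbFst α (P.ell Q)) Z := by
  refine (pbFst_regEpi hepi).fLocal fun u => ?_
  obtain ⟨h1, h2⟩ := ker_ell_le_fiberKer hloc hα u ((hloc Z).1 hZ)
  constructor
  · intro w hw
    obtain ⟨x, rfl⟩ := exists_fiberIncl_f1_eq hw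
    exact (mem_fiberKer_N1_iff hα u x).1 (h1 x.2)
  · intro w hw
    obtain ⟨x, rfl⟩ := exists_fiberIncl_f2_eq hw
    exact (mem_fiberKer_N2_iff hα u x).1 (h2 x.2)

end Nullification

/-- Any nullification functor `P_A` (a localization functor
whose local objects are exactly the `A`-null crossed modules and whose
coaugmentation is a regular epimorphism) is admissible for the class of
regular epimorphisms. -/
theorem nullification_admissible (A : XMod) (P : LocalizationFunctor)
    (hloc : ∀ X : XMod, P.IsLocal X ↔ ANull A X)
    (hepi : P.RegEpiLoc) :
    P.Admissible := by
  intro T Q α hα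
  have hπ : IsIso (P.map (pbFst α (P.ell Q))) :=
    P.isIso_map_of_forall_fLocal fun _ hZ => fLocal_pbFst_ell hloc (hepi Q) hα hZ
  refine isPullbackSquare_of_isIso ?_ hπ (P.iso_map_ell Q)
  rw [← P.map_comp, ← P.map_comp, pb_condition]
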